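/- Let α > −1 and let ε₀ be a real with 0 < ε₀ < √(3(α+1)). Then there exist constants c₁, c₂ > 0 such that for every real z with ε₀ ≤ z ≤ min(2, √(3(α+1))): c₁ ≤ |J_α(z)| ≤ c₂, where J_α is the Bessel function of the first kind of order α. -/

import Mathlib

/-!
Write `J_α(z) = (z/2)^α · S(t)` with `t = (z/2)²` and `S(t) = ∑ (-1)^ν t^ν / (ν! Γ(ν+α+1))`.
Consecutive terms of `S` have ratio `t / ((ν+1)(ν+α+1)) ≤ t / (α+1)`, which is at most `3/4` when
`z ≤ √(3(α+1))`. So `S` is an alternating series with decreasing terms and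
`(1/4)/Γ(α+1) ≤ 1/Γ(α+1) - t/Γ(α+2) ≤ S(t) ≤ 1/Γ(α+1)`, while `(z/2)^α` is squeezed between the
values of `x ↦ x^α` at the endpoints `ε₀/2` and `1` of the range of `z/2`.
-/

/-- The Bessel function of the first kind of order `α`, defined by its power
series (with real powers of the positive base `z/2`). -/
noncomputable def besselJ (α z : ℝ) : ℝ :=
  ∑' ν : ℕ, (-1 : ℝ) ^ ν / ((ν.factorial : ℝ) * Real.Gamma ((ν : ℝ) + α + 1)) *
    (z / 2) ^ (2 * (ν : ℝ) + α)

open Real Filter Set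

noncomputable def besselCoeff (α : ℝ) (ν : ℕ) : ℝ :=
  ((ν.factorial : ℝ) * Gamma ((ν : ℝ) + α + 1))⁻¹

noncomputable def besselSeries (α t : ℝ) : ℝ :=
  ∑' ν : ℕ, (-1) ^ ν * (besselCoeff α ν * t ^ ν)

section BesselCoeff

variable {α : ℝ}

lemma besselCoeff_pos (hα : -1 < α) (ν : ℕ) : 0 < besselCoeff α ν := by
  have := Gamma_pos_of_pos (by linarith [ν.cast_nonneg (α := ℝ)] : 0 < (ν : ℝ) + α + 1)
  unfold besselCoeff
  positivity

lemma besselCoeff_zero (α : ℝ) : besselCoeff α 0 = (Gamma (α + 1))⁻¹ := by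
  simp [besselCoeff]

lemma besselCoeff_succ (hα : -1 < α) (ν : ℕ) :
    besselCoeff α (ν + 1) = besselCoeff α ν / (((ν : ℝ) + 1) * ((ν : ℝ) + α + 1)) := by
  have hν : (ν : ℝ) + α + 1 ≠ 0 := by linarith [show (0 : ℝ) ≤ ν from ν.cast_nonneg]
  have hΓ : Gamma (((ν + 1 : ℕ) : ℝ) + α + 1) = ((ν : ℝ) + α + 1) * Gamma ((ν : ℝ) + α + 1) := by
    rw [← Gamma_add_one hν]
    push_cast
    ring_nf
  rw [besselCoeff, besselCoeff, hΓ, Nat.factorial_succ]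
  push_cast
  field_simp

lemma besselCoeff_mul_pow_succ (hα : -1 < α) (t : ℝ) (ν : ℕ) :
    besselCoeff α (ν + 1) * t ^ (ν + 1) =
      t / (((ν : ℝ) + 1) * ((ν : ℝ) + α + 1)) * (besselCoeff α ν * t ^ ν) := by
  rw [besselCoeff_succ hα, pow_succ]
  ring

lemma summable_besselCoeff_mul_pow (hα : -1 < α) (t : ℝ) :
    Summable fun ν ↦ besselCoeff α ν * t ^ ν := by
  refine summable_of_ratio_norm_eventually_le (r := 1 / 2) (by norm_num) ?_
  filter_upwards [eventually_ge_atTop ⌈2 * |t| - α⌉₊] with ν hν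
  have hν' : 2 * |t| - α ≤ ν := (Nat.le_ceil _).trans (by exact_mod_cast hν)
  have hd : 2 * |t| ≤ ((ν : ℝ) + 1) * ((ν : ℝ) + α + 1) := by
    nlinarith [abs_nonneg t, show (0 : ℝ) ≤ ν from ν.cast_nonneg]
  have hd0 : 0 < ((ν : ℝ) + 1) * ((ν : ℝ) + α + 1) := by
    nlinarith [show (0 : ℝ) ≤ ν from ν.cast_nonneg]
  rw [besselCoeff_mul_pow_succ hα, norm_mul, norm_div, Real.norm_of_nonneg hd0.le,
    Real.norm_eq_abs t]
  refine mul_le_mul_of_nonneg_right ?_ (norm_nonneg _)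
  rw [div_le_iff₀ hd0]
  linarith

lemma besselCoeff_mul_pow_succ_le (hα : -1 < α) {t : ℝ} (ht : 0 ≤ t) (ν : ℕ) :
    besselCoeff α (ν + 1) * t ^ (ν + 1) ≤ t / (α + 1) * (besselCoeff α ν * t ^ ν) := by
  have hν : (0 : ℝ) ≤ ν := ν.cast_nonneg
  have hd : α + 1 ≤ ((ν : ℝ) + 1) * ((ν : ℝ) + α + 1) := by nlinarith
  rw [besselCoeff_mul_pow_succ hα]
  have := (besselCoeff_pos hα ν).le
  gcongr
  linarith

end BesselCoeff

lemma besselJ_eq_rpow_mul_besselSeries (α : ℝ) {z : ℝ} (hz : 0 < z) :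
    besselJ α z = (z / 2) ^ α * besselSeries α ((z / 2) ^ 2) := by
  rw [besselJ, besselSeries, ← tsum_mul_left]
  congr 1 with ν
  have : (z / 2) ^ (2 * (ν : ℝ) + α) = (z / 2) ^ α * ((z / 2) ^ 2) ^ ν := by
    rw [rpow_add (by positivity), mul_comm, ← pow_mul, ← rpow_natCast]
    push_cast
    ring_nf
  rw [this, besselCoeff]
  ring

lemma besselSeries_mem_Icc {α t : ℝ} (hα : -1 < α) (ht : 0 ≤ t) (htα : t ≤ α + 1) :
    besselSeries α t ∈ Icc ((1 - t / (α + 1)) * (Gamma (α + 1))⁻¹) (Gamma (α + 1))⁻¹ := by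
  set f : ℕ → ℝ := fun ν ↦ besselCoeff α ν * t ^ ν
  have hratio : t / (α + 1) ≤ 1 := (div_le_one (by linarith)).2 htα
  have hf : Antitone f := antitone_nat_of_succ_le fun ν ↦
    (besselCoeff_mul_pow_succ_le hα ht ν).trans
      (mul_le_of_le_one_left (mul_nonneg (besselCoeff_pos hα ν).le (by positivity)) hratio)
  have hlim := (summable_besselCoeff_mul_pow hα t).tendsto_alternating_series_tsum
  have hlower := hf.alternating_series_le_tendsto hlim 1
  have hupper := hf.tendsto_le_alternating_series hlim 0
  have hf1 : besselCoeff α 1 * t ≤ t / (α + 1) * (Gamma (α + 1))⁻¹ := by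
    simpa [besselCoeff_zero] using besselCoeff_mul_pow_succ_le hα ht 0
  norm_num [f, Finset.sum_range_succ, besselCoeff_zero] at hlower hupper
  rw [besselSeries]
  exact ⟨by linarith, by linarith⟩

lemma rpow_mapsTo_uIcc {a b : ℝ} (ha : 0 < a) (hb : 0 < b) (α : ℝ) :
    MapsTo (· ^ α) (uIcc a b) (uIcc (a ^ α) (b ^ α)) := by
  have hpos : uIcc a b ⊆ Ioi 0 := fun x hx ↦ (lt_min ha hb).trans_le hx.1
  rcases le_total 0 α with hα | hα
  · exact ((monotoneOn_rpow_Ici_of_exponent_nonneg hα).mono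
      (hpos.trans Ioi_subset_Ici_self)).mapsTo_uIcc
  · exact ((antitoneOn_rpow_Ioi_of_exponent_nonpos hα).mono hpos).mapsTo_uIcc

theorem stmt_13 (α : ℝ) (hα : -1 < α) (ε0 : ℝ) (hε0 : 0 < ε0) :
    ∃ c1 c2 : ℝ, 0 < c1 ∧ 0 < c2 ∧
      ∀ z : ℝ, ε0 ≤ z → z ≤ min 2 (Real.sqrt (3 * (α + 1))) →
        c1 ≤ |besselJ α z| ∧ |besselJ α z| ≤ c2 := by
  have hΓ : 0 < (Gamma (α + 1))⁻¹ := inv_pos.2 (Gamma_pos_of_pos (by linarith))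
  refine ⟨min ((ε0 / 2) ^ α) 1 * (1 / 4 * (Gamma (α + 1))⁻¹),
    max ((ε0 / 2) ^ α) 1 * (Gamma (α + 1))⁻¹, by positivity, by positivity, ?_⟩
  intro z hz hz'
  obtain ⟨hz2, hzα⟩ := le_min_iff.1 hz'
  have hz0 : 0 < z := hε0.trans_le hz
  have ht : (z / 2) ^ 2 ≤ 3 / 4 * (α + 1) := by
    have := (Real.le_sqrt hz0.le (by linarith)).1 hzα
    nlinarith
  obtain ⟨hS_lower, hS_upper⟩ :=
    besselSeries_mem_Icc (t := (z / 2) ^ 2) hα (by positivity) (by linarith)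
  have hx := rpow_mapsTo_uIcc (by positivity : 0 < ε0 / 2) one_pos α
    (Icc_subset_uIcc ⟨by linarith, by linarith⟩ : z / 2 ∈ uIcc (ε0 / 2) 1)
  rw [one_rpow] at hx
  have hS : 1 / 4 * (Gamma (α + 1))⁻¹ ≤ besselSeries α ((z / 2) ^ 2) := by
    have : (z / 2) ^ 2 / (α + 1) ≤ 3 / 4 := (div_le_iff₀ (by linarith)).2 ht
    nlinarith
  rw [besselJ_eq_rpow_mul_besselSeries α hz0, abs_mul,
    abs_of_pos (rpow_pos_of_pos (by positivity) α), abs_of_pos (hS.trans_lt' (by positivity))]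
  constructor
  · gcongr
    exact hx.1
  · gcongr
    exacts [hS.trans' (by positivity), hx.2]
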